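/- The Pochhammer sum identity underlying the interchanged Hahn convolutions: for n, m ∈ ℤ_{≥0} and real a, b₁, b₂ (with nonzero denominators), Σ_{k=0}^{n} C(n,k) (b₁)_{n−k} (b₂)_k (a)_{m+k}/(a+b₁+b₂)_{m+k} = (a)_m (b₁+b₂)_n (a+b₁)_{m+n} / ((a+b₁+b₂)_{m+n} (a+b₁)_m). -/

import Mathlib

noncomputable def risingFactorial (a : ℝ) (k : ℕ) : ℝ := ∏ j ∈ Finset.range k, (a + j)

/-!
Writing `(a)_{m+k} = (a)_m (a+m)_k`, and similarly for `(a+b₁+b₂)_{m+k}` and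
`(a+b₁)_{m+n}`, reduces the identity to the case `m = 0` with `a` replaced by `s = a + m`:
`∑ₖ C(n,k) (b₁)_{n-k} (b₂)_k (s)_k / (s+b₁+b₂)_k = (b₁+b₂)_n (s+b₁)_n / (s+b₁+b₂)_n`,
a form of the Pfaff–Saalschütz summation. It is proved by induction on `n` in
Wilf–Zeilberger style: after Pascal's rule, the sum at rank `n + 1` is
`(b₁+b₂+n)(s+b₁+n)/(s+b₁+b₂+n)` times the sum at rank `n` plus a telescoping sum.
-/

open Finset

@[simp]
lemma risingFactorial_zero (a : ℝ) : risingFactorial a 0 = 1 := rfl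

lemma risingFactorial_succ (a : ℝ) (k : ℕ) :
    risingFactorial a (k + 1) = risingFactorial a k * (a + k) :=
  prod_range_succ _ k

lemma risingFactorial_add (a : ℝ) (m k : ℕ) :
    risingFactorial a (m + k) = risingFactorial a m * risingFactorial (a + m) k := by
  rw [risingFactorial, risingFactorial, risingFactorial, prod_range_add]
  congr 1
  refine prod_congr rfl fun j _ => ?_
  push_cast
  ring

lemma risingFactorial_ne_zero {a : ℝ} (ha : ∀ j : ℕ, a + j ≠ 0) (k : ℕ) :
    risingFactorial a k ≠ 0 :=
  prod_ne_zero_iff.mpr fun j _ => ha j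

section PfaffSaalschutz

variable (b₁ b₂ s : ℝ)

noncomputable def saalschutzTail (k : ℕ) : ℝ :=
  risingFactorial b₂ k * risingFactorial s k / risingFactorial (s + b₁ + b₂) k

noncomputable def saalschutzCertificate (n j : ℕ) : ℝ :=
  j * n.choose j * risingFactorial b₁ (n + 1 - j) * saalschutzTail b₁ b₂ s j
    / (s + b₁ + b₂ + n)

lemma saalschutzTail_succ (k : ℕ) :
    saalschutzTail b₁ b₂ s (k + 1)
      = saalschutzTail b₁ b₂ s k * ((b₂ + k) * (s + k) / (s + b₁ + b₂ + k)) := by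
  simp only [saalschutzTail, risingFactorial_succ]
  rw [mul_mul_mul_comm, mul_div_mul_comm]

lemma saalschutzCertificate_zero (n : ℕ) : saalschutzCertificate b₁ b₂ s n 0 = 0 := by
  simp [saalschutzCertificate]

lemma saalschutzCertificate_succ_self (n : ℕ) :
    saalschutzCertificate b₁ b₂ s n (n + 1) = 0 := by
  simp [saalschutzCertificate]

lemma saalschutz_wz_step {n k : ℕ} (hk : k ≤ n) (hck : s + b₁ + b₂ + k ≠ 0)
    (hcn : s + b₁ + b₂ + n ≠ 0) :
    (n.choose k : ℝ) * (risingFactorial b₁ (n + 1 - k) * saalschutzTail b₁ b₂ s k)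
        + n.choose k * (risingFactorial b₁ (n - k) * saalschutzTail b₁ b₂ s (k + 1))
      = (b₁ + b₂ + n) * (s + b₁ + n) / (s + b₁ + b₂ + n)
          * (n.choose k * (risingFactorial b₁ (n - k) * saalschutzTail b₁ b₂ s k))
        + (saalschutzCertificate b₁ b₂ s n (k + 1) - saalschutzCertificate b₁ b₂ s n k) := by
  have hsucc : n + 1 - k = n - k + 1 := by omega
  have hpred : n + 1 - (k + 1) = n - k := by omega
  have hchoose : (n.choose (k + 1) : ℝ) = n.choose k * (n - k) / (k + 1) := by
    rw [eq_div_iff (by positivity), ← Nat.cast_sub hk]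
    exact_mod_cast Nat.choose_succ_right_eq n k
  simp only [saalschutzCertificate, hsucc, hpred, hchoose, risingFactorial_succ,
    saalschutzTail_succ, Nat.cast_sub hk, Nat.cast_add, Nat.cast_one]
  field_simp
  ring

theorem pfaff_saalschutz (hc : ∀ j : ℕ, s + b₁ + b₂ + j ≠ 0) (n : ℕ) :
    ∑ k ∈ range (n + 1),
        (n.choose k : ℝ) * (risingFactorial b₁ (n - k) * saalschutzTail b₁ b₂ s k)
      = risingFactorial (b₁ + b₂) n * risingFactorial (s + b₁) n
          / risingFactorial (s + b₁ + b₂) n := by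
  induction n with
  | zero => simp [saalschutzTail]
  | succ n ih =>
    have hwz := fun k (hk : k ∈ range (n + 1)) =>
      saalschutz_wz_step b₁ b₂ s (Nat.lt_succ_iff.mp (mem_range.mp hk)) (hc k) (hc n)
    rw [sum_choose_succ_mul (fun i j => risingFactorial b₁ j * saalschutzTail b₁ b₂ s i),
      ← sum_add_distrib, sum_congr rfl hwz, sum_add_distrib, ← mul_sum, ih, sum_range_sub,
      saalschutzCertificate_succ_self, saalschutzCertificate_zero, risingFactorial_succ,
      risingFactorial_succ, risingFactorial_succ]
    field_simp
    ring

end PfaffSaalschutz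

theorem stmt_13 (a b₁ b₂ : ℝ) (ha : 0 < a) (hb₁ : 0 < b₁) (hb₂ : 0 < b₂)
    (n m : ℕ) :
    ∑ k ∈ Finset.range (n+1),
      (Nat.choose n k : ℝ) * risingFactorial b₁ (n - k) * risingFactorial b₂ k
        * risingFactorial a (m + k) / risingFactorial (a + b₁ + b₂) (m + k)
      = risingFactorial a m * risingFactorial (b₁ + b₂) n
          * risingFactorial (a + b₁) (m + n)
        / (risingFactorial (a + b₁ + b₂) (m + n) * risingFactorial (a + b₁) m) := by
  have hc : ∀ j : ℕ, a + m + b₁ + b₂ + j ≠ 0 := fun j => by positivity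
  have hbm := risingFactorial_ne_zero (a := a + b₁) (fun j => by positivity) m
  have hsum := pfaff_saalschutz b₁ b₂ (a + m) hc n
  have hshift : a + b₁ + b₂ + m = a + m + b₁ + b₂ := by ring
  have hterm : ∀ k ∈ range (n + 1),
      (n.choose k : ℝ) * risingFactorial b₁ (n - k) * risingFactorial b₂ k
          * risingFactorial a (m + k) / risingFactorial (a + b₁ + b₂) (m + k)
        = risingFactorial a m / risingFactorial (a + b₁ + b₂) m
          * (n.choose k * (risingFactorial b₁ (n - k) * saalschutzTail b₁ b₂ (a + m) k)) := by
    intro k _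
    rw [saalschutzTail, risingFactorial_add, risingFactorial_add, hshift]
    field_simp
  rw [sum_congr rfl hterm, ← mul_sum, hsum, risingFactorial_add,
    risingFactorial_add (a + b₁ + b₂), hshift, show a + b₁ + m = a + m + b₁ by ring]
  field_simp
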